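/- Suppose lim_{x→a⁺} s(x) = ∞, lim_{x→b} s(x)·M[a,x] = ∞, and μ extends continuously to x = a with a finite value μ(a). Set z₀ := sup_{x∈(a,b)} 1/(s(x)·M[a,x]). Then for every pair (w,y) with a < w < y < b one has (y − w)/(ξ(y) − ξ(w)) ≤ z₀. If in addition there exists x̂ ∈ (a,b) such that μ is strictly increasing on (a, x̂) and concave on (x̂, b), then the inequality is strict: (y − w)/(ξ(y) − ξ(w)) < z₀ for every such pair. -/

import Mathlib

open MeasureTheory Filter Set Topology
open scoped Classical

noncomputable section

/-- The state interval `(a, b)` where `a` is real and `b ∈ (a, ∞]`. -/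
def stInt (a : ℝ) (b : EReal) : Set ℝ := {x : ℝ | a < x ∧ (x : EReal) < b}

/-- The filter of approach to the right endpoint `b ∈ (a, ∞]`:
`atTop` when `b = ∞`, and the left-neighborhood filter of `b` otherwise. -/
def atB (b : EReal) : Filter ℝ :=
  if b = ⊤ then Filter.atTop else nhdsWithin b.toReal (Set.Iio b.toReal)

/-- The scale density `s(x) = exp(-∫_{x₀}^x 2μ/σ²)`. -/
def sDen (μ σ : ℝ → ℝ) (x₀ x : ℝ) : ℝ :=
  Real.exp (-(∫ y in x₀..x, 2 * μ y / (σ y) ^ 2))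

/-- The speed density `m(x) = 2/(σ(x)² s(x))`. -/
def mDen (μ σ : ℝ → ℝ) (x₀ x : ℝ) : ℝ :=
  2 / ((σ x) ^ 2 * sDen μ σ x₀ x)

/-- `M[a,x] = ∫_a^x m(u) du`. -/
def Mab (μ σ : ℝ → ℝ) (x₀ a x : ℝ) : ℝ :=
  ∫ u in Set.Ioo a x, mDen μ σ x₀ u

/-- The time potential `ξ(x) = ∫_{x₀}^x M[a,v] s(v) dv`. -/
def xiF (μ σ : ℝ → ℝ) (x₀ a x : ℝ) : ℝ :=
  ∫ v in x₀..x, Mab μ σ x₀ a v * sDen μ σ x₀ v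

/-- The running reward potential `g(x) = ∫_{x₀}^x (∫_a^v c(u) m(u) du) s(v) dv`. -/
def gF (μ σ c : ℝ → ℝ) (x₀ a x : ℝ) : ℝ :=
  ∫ v in x₀..x, (∫ u in Set.Ioo a v, c u * mDen μ σ x₀ u) * sDen μ σ x₀ v

/-- `h(x) = (∫_a^x (γ c(u) + p μ(u)) m(u) du) / M[a,x]`. -/
def hF (μ σ c : ℝ → ℝ) (x₀ a p γ x : ℝ) : ℝ :=
  (∫ u in Set.Ioo a x, (γ * c u + p * μ u) * mDen μ σ x₀ u) / Mab μ σ x₀ a x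

/-- The long-term average reward `F(w,y)` of the `(w,y)`-impulse policy. -/
def FF (μ σ c : ℝ → ℝ) (x₀ a p K γ w y : ℝ) : ℝ :=
  (p * (y - w) - K + γ * (gF μ σ c x₀ a y - gF μ σ c x₀ a w)) /
    (xiF μ σ x₀ a y - xiF μ σ x₀ a w)

/-- `c̄(b)`: equals `⟨c,π⟩` when `M[a,b] < ∞` and the boundary value `c(b)` otherwise. -/
def cbar (μ σ c : ℝ → ℝ) (x₀ a : ℝ) (b : EReal) (cb : ℝ) : ℝ :=
  if MeasureTheory.IntegrableOn (mDen μ σ x₀) (stInt a b) MeasureTheory.volume then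
    (∫ u in stInt a b, c u * mDen μ σ x₀ u) / (∫ u in stInt a b, mDen μ σ x₀ u)
  else cb

/-!
Since `(1/s)' = (2μ/σ²)·(1/s) = μ m` and `1/s → 0` at `a⁺`, one has `1/s(x) = ∫_a^x μ m`: the
quantity `1/(s M)` is the `m`-weighted average of `μ` over `(a, x)`. It is therefore bounded
near `a`, where `μ` has a finite limit, and at most `1` near `b`, where `s M → ∞`. So `z₀` is
finite, `s M ≥ 1/z₀` on `(a, b)`, and integrating gives `ξ(y) - ξ(w) ≥ (y - w)/z₀`.

Equality would force `s M ≡ 1/z₀` on `(w, y)`, i.e. `∫_a^x μ m = z₀ M(x)` there, and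
differentiating gives `μ ≡ z₀` on `(w, y)`. A function that increases strictly up to `x̂` and is
concave after it can only be constant on an interval lying beyond `x̂`, and then it stays `≤ z₀` on
`(a, y)` and `< z₀` on `(a, x̂)`; so its average over `(a, (w + y)/2)` is `< z₀`, a contradiction.
-/

theorem isOpen_stInt (a : ℝ) (b : EReal) : IsOpen (stInt a b) :=
  isOpen_Ioi.inter (isOpen_Iio.preimage continuous_coe_real_ereal)

theorem ordConnected_stInt (a : ℝ) (b : EReal) : (stInt a b).OrdConnected :=
  ⟨fun _ hx _ hy _ ht => ⟨hx.1.trans_le ht.1, (EReal.coe_le_coe_iff.2 ht.2).trans_lt hy.2⟩⟩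

theorem Ioc_subset_stInt {a x : ℝ} {b : EReal} (hx : x ∈ stInt a b) : Ioc a x ⊆ stInt a b :=
  fun _ ht => ⟨ht.1, (EReal.coe_le_coe_iff.2 ht.2).trans_lt hx.2⟩

theorem exists_forall_ge_of_eventually_atB {a x₀ : ℝ} {b : EReal} (hx₀ : x₀ ∈ stInt a b)
    {p : ℝ → Prop} (h : ∀ᶠ x in atB b, p x) :
    ∃ x₁ ∈ stInt a b, ∀ x ∈ stInt a b, x₁ ≤ x → p x := by
  unfold atB at h
  split_ifs at h with hb
  · obtain ⟨X, hX⟩ := h.exists_forall_of_atTop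
    exact ⟨max X x₀, ⟨hx₀.1.trans_le (le_max_right _ _), hb ▸ EReal.coe_lt_top _⟩,
      fun x _ hx => hX x ((le_max_left _ _).trans hx)⟩
  · have hbr : ((b.toReal : ℝ) : EReal) = b := EReal.coe_toReal hb (ne_bot_of_gt hx₀.2)
    obtain ⟨l, hl, hlp⟩ := mem_nhdsLT_iff_exists_Ioo_subset.1 h
    have hx₀b : x₀ < b.toReal := by rw [← EReal.coe_lt_coe_iff, hbr]; exact hx₀.2
    obtain ⟨c, hlc, hcb⟩ := exists_between (max_lt hl hx₀b)
    refine ⟨c, ⟨hx₀.1.trans ((le_max_right l x₀).trans_lt hlc), ?_⟩, fun x hx hcx => hlp ?_⟩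
    · rw [← hbr, EReal.coe_lt_coe_iff]; exact hcb
    · refine ⟨(le_max_left l x₀).trans_lt (hlc.trans_le hcx), ?_⟩
      rw [← EReal.coe_lt_coe_iff, hbr]; exact hx.2

section

variable {E : Type*} [NormedAddCommGroup E] [NormedSpace ℝ E]

theorem setIntegral_Ioo_eq_intervalIntegral {F : ℝ → E} {a x : ℝ} (hax : a ≤ x) :
    ∫ t in Ioo a x, F t = ∫ t in a..x, F t := by
  rw [intervalIntegral.integral_of_le hax, integral_Ioc_eq_integral_Ioo]

theorem hasDerivAt_setIntegral_Ioo [CompleteSpace E] {F : ℝ → E} {a x y : ℝ} (hax : a < x)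
    (hxy : x < y) (hF : IntegrableOn F (Ioo a y)) (hc : ContinuousAt F x) :
    HasDerivAt (fun z => ∫ t in Ioo a z, F t) (F x) x := by
  have hint : IntervalIntegrable F volume a x :=
    (intervalIntegrable_iff_integrableOn_Ioo_of_le hax.le).2
      (hF.mono_set (Ioo_subset_Ioo_right hxy.le))
  have hmeas : StronglyMeasurableAtFilter F (𝓝 x) :=
    AEStronglyMeasurable.stronglyMeasurableAtFilter_of_mem hF.aestronglyMeasurable
      (Ioo_mem_nhds hax hxy)
  refine (intervalIntegral.integral_hasDerivAt_right hint hmeas hc).congr_of_eventuallyEq ?_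
  filter_upwards [Ioi_mem_nhds hax] with z hz
  exact setIntegral_Ioo_eq_intervalIntegral hz.le

theorem tendsto_setIntegral_Ioo_nhdsGT {F : ℝ → E} {a y : ℝ} (hay : a < y)
    (hF : IntegrableOn F (Ioo a y)) :
    Tendsto (fun x => ∫ t in Ioo a x, F t) (𝓝[>] a) (𝓝 0) := by
  rw [← integrableOn_Icc_iff_integrableOn_Ioo, ← uIcc_of_le hay.le] at hF
  have hcont := (intervalIntegral.continuousOn_primitive_interval hF a left_mem_uIcc).tendsto
  rw [intervalIntegral.integral_same] at hcont
  have hle : 𝓝[>] a ≤ 𝓝[uIcc a y] a := nhdsWithin_le_of_mem <|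
    mem_of_superset (Ioo_mem_nhdsGT hay) (uIcc_of_le hay.le ▸ Ioo_subset_Icc_self)
  refine (hcont.mono_left hle).congr' ?_
  filter_upwards [self_mem_nhdsWithin] with x hx
  exact (setIntegral_Ioo_eq_intervalIntegral (le_of_lt hx)).symm

theorem eq_zero_of_hasDerivAt_zero_of_tendsto_nhdsGT {f : ℝ → E} {a x : ℝ} (hax : a < x)
    (hf : ∀ t ∈ Ioc a x, HasDerivAt f 0 t) (hlim : Tendsto f (𝓝[>] a) (𝓝 0)) : f x = 0 := by
  have hconst : ∀ t ∈ Ioo a x, f t = f x := fun t ht =>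
    (constant_of_has_deriv_right_zero
      (fun z hz => (hf z ⟨ht.1.trans_le hz.1, hz.2⟩).continuousAt.continuousWithinAt)
      (fun z hz => (hf z ⟨ht.1.trans_le hz.1, hz.2.le⟩).hasDerivWithinAt) x
      (right_mem_Icc.2 ht.2.le)).symm
  refine tendsto_nhds_unique (tendsto_const_nhds.congr' ?_) hlim
  filter_upwards [Ioo_mem_nhdsGT hax] with t ht using (hconst t ht).symm

end

theorem exists_bound_Ioo_of_tendsto_nhdsGT {G : Type*} [NormedAddCommGroup G] {f : ℝ → G}
    {a x : ℝ} {L : G} (hax : a < x) (hf : ContinuousOn f (Ioc a x))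
    (hL : Tendsto f (𝓝[>] a) (𝓝 L)) :
    ∃ C, ∀ t ∈ Ioo a x, ‖f t‖ ≤ C := by
  have hf' := hf.mono Ioo_subset_Ioc_self
  have hx : Tendsto f (𝓝[<] x) (𝓝 (f x)) :=
    ((hf x (right_mem_Ioc.2 hax)).tendsto).mono_left (nhdsWithin_le_of_mem (Ioc_mem_nhdsLT hax))
  obtain ⟨C, hC⟩ := isCompact_Icc.exists_bound_of_continuousOn
    (continuousOn_Icc_extendFrom_Ioo hf' hL hx)
  exact ⟨C, fun t ht => extendFrom_extends hf' t ht ▸ hC t (Ioo_subset_Icc_self ht)⟩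

theorem setIntegral_pos_of_pos_on_Ioo {f : ℝ → ℝ} {s : Set ℝ} {p q : ℝ} (hs : MeasurableSet s)
    (hf : IntegrableOn f s) (hnonneg : ∀ t ∈ s, 0 ≤ f t) (hpq : p < q) (hsub : Ioo p q ⊆ s)
    (hpos : ∀ t ∈ Ioo p q, 0 < f t) : 0 < ∫ t in s, f t := by
  rw [setIntegral_pos_iff_support_of_nonneg_ae ((ae_restrict_iff' hs).2 (ae_of_all _ hnonneg)) hf]
  calc (0 : ENNReal) < volume (Ioo p q) := by simp [hpq]
    _ ≤ volume (Function.support f ∩ s) :=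
      measure_mono fun t ht => ⟨(hpos t ht).ne', hsub ht⟩

theorem StrictMonoOn.lt_of_continuousWithinAt_Iio {f : ℝ → ℝ} {a c : ℝ}
    (hmono : StrictMonoOn f (Ioo a c)) (hc : ContinuousWithinAt f (Iio c) c) :
    ∀ t ∈ Ioo a c, f t < f c := by
  intro t ht
  have hmid : (t + c) / 2 ∈ Ioo a c := ⟨by linarith [ht.1, ht.2], by linarith [ht.2]⟩
  refine (hmono ht hmid (by linarith [ht.2])).trans_le (ge_of_tendsto hc.tendsto ?_)
  filter_upwards [Ioo_mem_nhdsLT hmid.2] with r hr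
  exact (hmono hmid ⟨hmid.1.trans hr.1, hr.2⟩ hr.1).le

theorem ConcaveOn.le_of_eqOn_Ioo {f : ℝ → ℝ} {s : Set ℝ} {w y z : ℝ} (hconc : ConcaveOn ℝ s f)
    (hwy : w < y) (hsub : Ioo w y ⊆ s) (hconst : ∀ t ∈ Ioo w y, f t = z) :
    ∀ t ∈ s, f t ≤ z := by
  have hv : (w + y) / 2 ∈ Ioo w y := ⟨by linarith, by linarith⟩
  have hmax : IsLocalMaxOn f s ((w + y) / 2) := by
    filter_upwards [nhdsWithin_le_nhds (isOpen_Ioo.mem_nhds hv)] with t ht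
    rw [hconst t ht, hconst _ hv]
  intro t ht
  rw [← hconst _ hv]
  exact IsMaxOn.of_isLocalMaxOn_of_concaveOn (hsub hv) hmax hconc ht

theorem le_of_strictMonoOn_of_concaveOn_of_eqOn_Ioo {f : ℝ → ℝ} {a c w y z : ℝ}
    (hmono : StrictMonoOn f (Ioo a c)) (hconc : ConcaveOn ℝ (Ioo c y) f) (hcont : ContinuousAt f c)
    (haw : a ≤ w) (hwy : w < y) (hconst : ∀ t ∈ Ioo w y, f t = z) :
    (∀ t ∈ Ioo a y, f t ≤ z) ∧ ∀ t ∈ Ioo a c, f t < z := by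
  rcases lt_or_ge w c with hwc | hcw
  · set q := min y c
    have hwq : w < q := lt_min hwy hwc
    have hmem : ∀ t ∈ Ioo w q, t ∈ Ioo w y ∧ t ∈ Ioo a c := fun t ht =>
      ⟨⟨ht.1, ht.2.trans_le (min_le_left _ _)⟩,
        ⟨haw.trans_lt ht.1, ht.2.trans_le (min_le_right _ _)⟩⟩
    have h₁ := hmem ((2 * w + q) / 3) ⟨by linarith, by linarith⟩
    have h₂ := hmem ((w + 2 * q) / 3) ⟨by linarith, by linarith⟩
    have hlt := hmono h₁.2 h₂.2 (by linarith)
    rw [hconst _ h₁.1, hconst _ h₂.1] at hlt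
    exact absurd hlt (lt_irrefl z)
  have hright := hconc.le_of_eqOn_Ioo hwy (Ioo_subset_Ioo_left hcw) hconst
  have hc : f c ≤ z := le_of_tendsto (hcont.tendsto.mono_left nhdsWithin_le_nhds)
    (mem_of_superset (Ioo_mem_nhdsGT (hcw.trans_lt hwy)) hright)
  have hleft : ∀ t ∈ Ioo a c, f t < z := fun t ht =>
    (hmono.lt_of_continuousWithinAt_Iio hcont.continuousWithinAt t ht).trans_le hc
  refine ⟨fun t ht => ?_, hleft⟩
  rcases lt_trichotomy t c with htc | rfl | hct
  · exact (hleft t ⟨ht.1, htc⟩).le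
  · exact hc
  · exact hright t ⟨hct, ht.2⟩

theorem sub_div_intervalIntegral_le {f : ℝ → ℝ} {w y z : ℝ} (hwy : w < y) (hz : 0 < z)
    (hf : IntervalIntegrable f volume w y) (hle : ∀ t ∈ Icc w y, z⁻¹ ≤ f t) :
    (y - w) / ∫ t in w..y, f t ≤ z := by
  have hint : (y - w) / z ≤ ∫ t in w..y, f t := by
    simpa [div_eq_mul_inv] using
      intervalIntegral.integral_mono_on hwy.le intervalIntegrable_const hf hle
  exact (div_le_comm₀ ((div_pos (sub_pos.2 hwy) hz).trans_le hint) hz).2 hint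

theorem sub_div_intervalIntegral_lt {f : ℝ → ℝ} {w y z : ℝ} (hwy : w < y) (hz : 0 < z)
    (hf : ContinuousOn f (Icc w y)) (hle : ∀ t ∈ Icc w y, z⁻¹ ≤ f t)
    (hlt : ∃ v ∈ Icc w y, z⁻¹ < f v) :
    (y - w) / ∫ t in w..y, f t < z := by
  have hint : (y - w) / z < ∫ t in w..y, f t := by
    simpa [div_eq_mul_inv] using
      intervalIntegral.integral_lt_integral_of_continuousOn_of_le_of_exists_lt hwy
        continuousOn_const hf (fun t ht => hle t (Ioc_subset_Icc_self ht)) hlt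
  exact (div_lt_comm₀ ((div_pos (sub_pos.2 hwy) hz).trans hint) hz).2 hint

section ScaleSpeed

variable {a : ℝ} {b : EReal} {μ σ : ℝ → ℝ} {x₀ x : ℝ}

theorem sDen_pos : 0 < sDen μ σ x₀ x := Real.exp_pos _

theorem mDen_pos (hσpos : ∀ x ∈ stInt a b, 0 < (σ x) ^ 2) (hx : x ∈ stInt a b) :
    0 < mDen μ σ x₀ x :=
  div_pos two_pos (mul_pos (hσpos x hx) sDen_pos)

theorem hasDerivAt_integral_drift (hx₀ : x₀ ∈ stInt a b) (hμcont : ContinuousOn μ (stInt a b))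
    (hσcont : ContinuousOn σ (stInt a b)) (hσpos : ∀ x ∈ stInt a b, 0 < (σ x) ^ 2)
    (hx : x ∈ stInt a b) :
    HasDerivAt (fun t => ∫ y in x₀..t, 2 * μ y / (σ y) ^ 2) (2 * μ x / (σ x) ^ 2) x := by
  have hg : ContinuousOn (fun y => 2 * μ y / (σ y) ^ 2) (stInt a b) :=
    (continuousOn_const.mul hμcont).div (hσcont.pow 2) fun y hy => (hσpos y hy).ne'
  exact intervalIntegral.integral_hasDerivAt_right
    ((hg.mono ((ordConnected_stInt a b).uIcc_subset hx₀ hx)).intervalIntegrable)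
    (hg.stronglyMeasurableAtFilter (isOpen_stInt a b) x hx)
    (hg.continuousAt ((isOpen_stInt a b).mem_nhds hx))

theorem continuousOn_sDen (hx₀ : x₀ ∈ stInt a b) (hμcont : ContinuousOn μ (stInt a b))
    (hσcont : ContinuousOn σ (stInt a b)) (hσpos : ∀ x ∈ stInt a b, 0 < (σ x) ^ 2) :
    ContinuousOn (sDen μ σ x₀) (stInt a b) := fun _ hx =>
  (hasDerivAt_integral_drift hx₀ hμcont hσcont hσpos hx).neg.exp.continuousAt.continuousWithinAt

theorem hasDerivAt_inv_sDen (hx₀ : x₀ ∈ stInt a b) (hμcont : ContinuousOn μ (stInt a b))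
    (hσcont : ContinuousOn σ (stInt a b)) (hσpos : ∀ x ∈ stInt a b, 0 < (σ x) ^ 2)
    (hx : x ∈ stInt a b) :
    HasDerivAt (fun t => (sDen μ σ x₀ t)⁻¹) (μ x * mDen μ σ x₀ x) x := by
  have hσx := (hσpos x hx).ne'
  simp only [mDen, sDen, Real.exp_neg, inv_inv]
  convert (hasDerivAt_integral_drift hx₀ hμcont hσcont hσpos hx).exp using 1
  field_simp

theorem continuousOn_mDen (hx₀ : x₀ ∈ stInt a b) (hμcont : ContinuousOn μ (stInt a b))
    (hσcont : ContinuousOn σ (stInt a b)) (hσpos : ∀ x ∈ stInt a b, 0 < (σ x) ^ 2) :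
    ContinuousOn (mDen μ σ x₀) (stInt a b) :=
  continuousOn_const.div ((hσcont.pow 2).mul (continuousOn_sDen hx₀ hμcont hσcont hσpos))
    fun x hx => (mul_pos (hσpos x hx) sDen_pos).ne'

theorem hasDerivAt_setIntegral_Ioo_of_mem_stInt {F : ℝ → ℝ}
    (hF : ∀ y ∈ stInt a b, IntegrableOn F (Ioo a y)) (hFcont : ContinuousOn F (stInt a b))
    (hx : x ∈ stInt a b) : HasDerivAt (fun z => ∫ t in Ioo a z, F t) (F x) x := by
  have hnhds := (isOpen_stInt a b).mem_nhds hx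
  obtain ⟨y, hxy, hy⟩ := Filter.Eventually.exists_gt hnhds
  exact hasDerivAt_setIntegral_Ioo hx.1 hxy (hF y hy) (hFcont.continuousAt hnhds)

theorem hasDerivAt_Mab (hx₀ : x₀ ∈ stInt a b) (hμcont : ContinuousOn μ (stInt a b))
    (hσcont : ContinuousOn σ (stInt a b)) (hσpos : ∀ x ∈ stInt a b, 0 < (σ x) ^ 2)
    (hMfin : ∀ x ∈ stInt a b, IntegrableOn (mDen μ σ x₀) (Ioo a x)) (hx : x ∈ stInt a b) :
    HasDerivAt (Mab μ σ x₀ a) (mDen μ σ x₀ x) x :=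
  hasDerivAt_setIntegral_Ioo_of_mem_stInt hMfin (continuousOn_mDen hx₀ hμcont hσcont hσpos) hx

theorem Mab_pos (hσpos : ∀ x ∈ stInt a b, 0 < (σ x) ^ 2)
    (hMfin : ∀ x ∈ stInt a b, IntegrableOn (mDen μ σ x₀) (Ioo a x)) (hx : x ∈ stInt a b) :
    0 < Mab μ σ x₀ a x :=
  have hpos : ∀ t ∈ Ioo a x, 0 < mDen μ σ x₀ t := fun _ ht =>
    mDen_pos hσpos (Ioc_subset_stInt hx (Ioo_subset_Ioc_self ht))
  setIntegral_pos_of_pos_on_Ioo measurableSet_Ioo (hMfin x hx) (fun _ ht => (hpos _ ht).le) hx.1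
    subset_rfl hpos

theorem continuousOn_Mab_mul_sDen (hx₀ : x₀ ∈ stInt a b) (hμcont : ContinuousOn μ (stInt a b))
    (hσcont : ContinuousOn σ (stInt a b)) (hσpos : ∀ x ∈ stInt a b, 0 < (σ x) ^ 2)
    (hMfin : ∀ x ∈ stInt a b, IntegrableOn (mDen μ σ x₀) (Ioo a x)) :
    ContinuousOn (fun v => Mab μ σ x₀ a v * sDen μ σ x₀ v) (stInt a b) :=
  ContinuousOn.mul
    (fun _ hx => (hasDerivAt_Mab hx₀ hμcont hσcont hσpos hMfin hx).continuousAt.continuousWithinAt)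
    (continuousOn_sDen hx₀ hμcont hσcont hσpos)

theorem integrableOn_mul_mDen {μa : ℝ} (hμcont : ContinuousOn μ (stInt a b))
    (hMfin : ∀ x ∈ stInt a b, IntegrableOn (mDen μ σ x₀) (Ioo a x))
    (hμa : Tendsto μ (𝓝[>] a) (𝓝 μa)) (hx : x ∈ stInt a b) :
    IntegrableOn (fun t => μ t * mDen μ σ x₀ t) (Ioo a x) := by
  have hμx := hμcont.mono (Ioc_subset_stInt hx)
  obtain ⟨C, hC⟩ := exists_bound_Ioo_of_tendsto_nhdsGT hx.1 hμx hμa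
  exact (hMfin x hx).bdd_mul ((hμx.mono Ioo_subset_Ioc_self).aestronglyMeasurable measurableSet_Ioo)
    ((ae_restrict_iff' measurableSet_Ioo).2 (ae_of_all _ hC))

theorem inv_sDen_eq_setIntegral {μa : ℝ} (hx₀ : x₀ ∈ stInt a b)
    (hμcont : ContinuousOn μ (stInt a b)) (hσcont : ContinuousOn σ (stInt a b))
    (hσpos : ∀ x ∈ stInt a b, 0 < (σ x) ^ 2)
    (hMfin : ∀ x ∈ stInt a b, IntegrableOn (mDen μ σ x₀) (Ioo a x))
    (hsa : Tendsto (sDen μ σ x₀) (𝓝[>] a) atTop) (hμa : Tendsto μ (𝓝[>] a) (𝓝 μa))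
    (hx : x ∈ stInt a b) :
    (sDen μ σ x₀ x)⁻¹ = ∫ t in Ioo a x, μ t * mDen μ σ x₀ t := by
  have hint := fun y (hy : y ∈ stInt a b) => integrableOn_mul_mDen hμcont hMfin hμa hy
  have hderiv : ∀ t ∈ Ioc a x, HasDerivAt
      (fun z => (sDen μ σ x₀ z)⁻¹ - ∫ u in Ioo a z, μ u * mDen μ σ x₀ u) 0 t := fun t ht => by
    have htI := Ioc_subset_stInt hx ht
    simpa only [sub_self] using (hasDerivAt_inv_sDen hx₀ hμcont hσcont hσpos htI).fun_sub
      (hasDerivAt_setIntegral_Ioo_of_mem_stInt hint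
        (hμcont.mul (continuousOn_mDen hx₀ hμcont hσcont hσpos)) htI)
  have hlim := hsa.inv_tendsto_atTop.sub (tendsto_setIntegral_Ioo_nhdsGT hx.1 (hint x hx))
  rw [sub_zero] at hlim
  exact sub_eq_zero.1 (eq_zero_of_hasDerivAt_zero_of_tendsto_nhdsGT hx.1 hderiv hlim :)

theorem one_div_sDen_mul_Mab_eq {μa : ℝ} (hx₀ : x₀ ∈ stInt a b)
    (hμcont : ContinuousOn μ (stInt a b)) (hσcont : ContinuousOn σ (stInt a b))
    (hσpos : ∀ x ∈ stInt a b, 0 < (σ x) ^ 2)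
    (hMfin : ∀ x ∈ stInt a b, IntegrableOn (mDen μ σ x₀) (Ioo a x))
    (hsa : Tendsto (sDen μ σ x₀) (𝓝[>] a) atTop) (hμa : Tendsto μ (𝓝[>] a) (𝓝 μa))
    (hx : x ∈ stInt a b) :
    1 / (sDen μ σ x₀ x * Mab μ σ x₀ a x) =
      (∫ t in Ioo a x, μ t * mDen μ σ x₀ t) / Mab μ σ x₀ a x := by
  rw [one_div, mul_inv, ← div_eq_mul_inv,
    inv_sDen_eq_setIntegral hx₀ hμcont hσcont hσpos hMfin hsa hμa hx]

theorem one_div_sDen_mul_Mab_le {μa C : ℝ} (hx₀ : x₀ ∈ stInt a b)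
    (hμcont : ContinuousOn μ (stInt a b)) (hσcont : ContinuousOn σ (stInt a b))
    (hσpos : ∀ x ∈ stInt a b, 0 < (σ x) ^ 2)
    (hMfin : ∀ x ∈ stInt a b, IntegrableOn (mDen μ σ x₀) (Ioo a x))
    (hsa : Tendsto (sDen μ σ x₀) (𝓝[>] a) atTop) (hμa : Tendsto μ (𝓝[>] a) (𝓝 μa))
    (hx : x ∈ stInt a b) (hle : ∀ t ∈ Ioo a x, μ t ≤ C) :
    1 / (sDen μ σ x₀ x * Mab μ σ x₀ a x) ≤ C := by
  rw [one_div_sDen_mul_Mab_eq hx₀ hμcont hσcont hσpos hMfin hsa hμa hx,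
    div_le_iff₀ (Mab_pos hσpos hMfin hx), Mab, ← integral_const_mul]
  refine setIntegral_mono_on (integrableOn_mul_mDen hμcont hMfin hμa hx)
    ((hMfin x hx).const_mul C) measurableSet_Ioo fun t ht => ?_
  exact mul_le_mul_of_nonneg_right (hle t ht)
    (mDen_pos hσpos (Ioc_subset_stInt hx (Ioo_subset_Ioc_self ht))).le

theorem one_div_sDen_mul_Mab_lt {μa C p q : ℝ} (hx₀ : x₀ ∈ stInt a b)
    (hμcont : ContinuousOn μ (stInt a b)) (hσcont : ContinuousOn σ (stInt a b))
    (hσpos : ∀ x ∈ stInt a b, 0 < (σ x) ^ 2)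
    (hMfin : ∀ x ∈ stInt a b, IntegrableOn (mDen μ σ x₀) (Ioo a x))
    (hsa : Tendsto (sDen μ σ x₀) (𝓝[>] a) atTop) (hμa : Tendsto μ (𝓝[>] a) (𝓝 μa))
    (hx : x ∈ stInt a b) (hle : ∀ t ∈ Ioo a x, μ t ≤ C) (hpq : p < q)
    (hsub : Ioo p q ⊆ Ioo a x) (hlt : ∀ t ∈ Ioo p q, μ t < C) :
    1 / (sDen μ σ x₀ x * Mab μ σ x₀ a x) < C := by
  have hm : ∀ t ∈ Ioo a x, 0 < mDen μ σ x₀ t := fun _ ht =>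
    mDen_pos hσpos (Ioc_subset_stInt hx (Ioo_subset_Ioc_self ht))
  rw [one_div_sDen_mul_Mab_eq hx₀ hμcont hσcont hσpos hMfin hsa hμa hx,
    div_lt_iff₀ (Mab_pos hσpos hMfin hx), Mab, ← integral_const_mul, ← sub_pos,
    ← integral_sub ((hMfin x hx).const_mul C) (integrableOn_mul_mDen hμcont hMfin hμa hx)]
  refine setIntegral_pos_of_pos_on_Ioo measurableSet_Ioo
    (((hMfin x hx).const_mul C).sub (integrableOn_mul_mDen hμcont hMfin hμa hx))
    (fun t ht => ?_) hpq hsub fun t ht => ?_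
  · exact sub_nonneg.2 (mul_le_mul_of_nonneg_right (hle t ht) (hm t ht).le)
  · exact sub_pos.2 (mul_lt_mul_of_pos_right (hlt t ht) (hm t (hsub ht)))

theorem eqOn_of_one_div_sDen_mul_Mab_eqOn {μa w y c : ℝ} (hx₀ : x₀ ∈ stInt a b)
    (hμcont : ContinuousOn μ (stInt a b)) (hσcont : ContinuousOn σ (stInt a b))
    (hσpos : ∀ x ∈ stInt a b, 0 < (σ x) ^ 2)
    (hMfin : ∀ x ∈ stInt a b, IntegrableOn (mDen μ σ x₀) (Ioo a x))
    (hsa : Tendsto (sDen μ σ x₀) (𝓝[>] a) atTop) (hμa : Tendsto μ (𝓝[>] a) (𝓝 μa))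
    (hsub : Ioo w y ⊆ stInt a b)
    (hc : ∀ v ∈ Ioo w y, 1 / (sDen μ σ x₀ v * Mab μ σ x₀ a v) = c) :
    ∀ v ∈ Ioo w y, μ v = c := by
  intro v hv
  have hvI := hsub hv
  have hNM : (fun z => ∫ t in Ioo a z, μ t * mDen μ σ x₀ t) =ᶠ[𝓝 v]
      fun z => c * Mab μ σ x₀ a z := by
    filter_upwards [isOpen_Ioo.mem_nhds hv] with z hz
    rw [← div_eq_iff (Mab_pos hσpos hMfin (hsub hz)).ne', ← hc z hz,
      one_div_sDen_mul_Mab_eq hx₀ hμcont hσcont hσpos hMfin hsa hμa (hsub hz)]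
  have hderiv := (hasDerivAt_setIntegral_Ioo_of_mem_stInt
    (fun y hy => integrableOn_mul_mDen hμcont hMfin hμa hy)
    (hμcont.mul (continuousOn_mDen hx₀ hμcont hσcont hσpos)) hvI).unique
    (((hasDerivAt_Mab hx₀ hμcont hσcont hσpos hMfin hvI).const_mul c).congr_of_eventuallyEq hNM)
  exact mul_right_cancel₀ (mDen_pos hσpos hvI).ne' hderiv

theorem bddAbove_one_div_sDen_mul_Mab {μa : ℝ} (hx₀ : x₀ ∈ stInt a b)
    (hμcont : ContinuousOn μ (stInt a b)) (hσcont : ContinuousOn σ (stInt a b))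
    (hσpos : ∀ x ∈ stInt a b, 0 < (σ x) ^ 2)
    (hMfin : ∀ x ∈ stInt a b, IntegrableOn (mDen μ σ x₀) (Ioo a x))
    (hsa : Tendsto (sDen μ σ x₀) (𝓝[>] a) atTop)
    (hsMb : Tendsto (fun x => sDen μ σ x₀ x * Mab μ σ x₀ a x) (atB b) atTop)
    (hμa : Tendsto μ (𝓝[>] a) (𝓝 μa)) :
    BddAbove ((fun x => 1 / (sDen μ σ x₀ x * Mab μ σ x₀ a x)) '' stInt a b) := by
  obtain ⟨x₁, hx₁, hge⟩ := exists_forall_ge_of_eventually_atB hx₀ (hsMb.eventually_ge_atTop 1)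
  obtain ⟨C, hC⟩ :=
    exists_bound_Ioo_of_tendsto_nhdsGT hx₁.1 (hμcont.mono (Ioc_subset_stInt hx₁)) hμa
  refine ⟨max C 1, forall_mem_image.2 fun x hx => ?_⟩
  rcases le_total x x₁ with hxx₁ | hx₁x
  · refine le_max_of_le_left (one_div_sDen_mul_Mab_le hx₀ hμcont hσcont hσpos hMfin hsa hμa hx
      fun t ht => ?_)
    exact (Real.le_norm_self _).trans (hC t ⟨ht.1, ht.2.trans_le hxx₁⟩)
  · have h1 := hge x hx hx₁x
    exact le_max_of_le_right (div_le_one_of_le₀ h1 (zero_le_one.trans h1))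

theorem xiF_sub_xiF (hx₀ : x₀ ∈ stInt a b) (hμcont : ContinuousOn μ (stInt a b))
    (hσcont : ContinuousOn σ (stInt a b)) (hσpos : ∀ x ∈ stInt a b, 0 < (σ x) ^ 2)
    (hMfin : ∀ x ∈ stInt a b, IntegrableOn (mDen μ σ x₀) (Ioo a x)) {w y : ℝ}
    (hw : w ∈ stInt a b) (hy : y ∈ stInt a b) :
    xiF μ σ x₀ a y - xiF μ σ x₀ a w = ∫ v in w..y, Mab μ σ x₀ a v * sDen μ σ x₀ v := by
  have hint : ∀ z ∈ stInt a b, IntervalIntegrable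
      (fun v => Mab μ σ x₀ a v * sDen μ σ x₀ v) volume x₀ z := fun z hz =>
    ((continuousOn_Mab_mul_sDen hx₀ hμcont hσcont hσpos hMfin).mono
      ((ordConnected_stInt a b).uIcc_subset hx₀ hz)).intervalIntegrable
  exact intervalIntegral.integral_interval_sub_left (hint y hy) (hint w hw)

theorem exists_one_div_sDen_mul_Mab_lt {μa xh w y z : ℝ} (hx₀ : x₀ ∈ stInt a b)
    (hμcont : ContinuousOn μ (stInt a b)) (hσcont : ContinuousOn σ (stInt a b))
    (hσpos : ∀ x ∈ stInt a b, 0 < (σ x) ^ 2)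
    (hMfin : ∀ x ∈ stInt a b, IntegrableOn (mDen μ σ x₀) (Ioo a x))
    (hsa : Tendsto (sDen μ σ x₀) (𝓝[>] a) atTop) (hμa : Tendsto μ (𝓝[>] a) (𝓝 μa))
    (hxh : xh ∈ stInt a b) (hmono : StrictMonoOn μ (Ioo a xh))
    (hconc : ConcaveOn ℝ {x : ℝ | xh < x ∧ (x : EReal) < b} μ)
    (hw : a < w) (hwy : w < y) (hy : y ∈ stInt a b)
    (hz : ∀ t ∈ stInt a b, 1 / (sDen μ σ x₀ t * Mab μ σ x₀ a t) ≤ z) :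
    ∃ v ∈ Ioo w y, 1 / (sDen μ σ x₀ v * Mab μ σ x₀ a v) < z := by
  by_contra! hge
  have hsub : Ioo w y ⊆ stInt a b := fun t ht => Ioc_subset_stInt hy ⟨hw.trans ht.1, ht.2.le⟩
  have hconst := eqOn_of_one_div_sDen_mul_Mab_eqOn hx₀ hμcont hσcont hσpos hMfin hsa hμa hsub
    fun v hv => (hz v (hsub hv)).antisymm (hge v hv)
  have hconc' : ConcaveOn ℝ (Ioo xh y) μ := hconc.subset
    (fun t ht => ⟨ht.1, (Ioc_subset_stInt hy ⟨hxh.1.trans ht.1, ht.2.le⟩).2⟩) (convex_Ioo _ _)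
  obtain ⟨hle, hlt⟩ := le_of_strictMonoOn_of_concaveOn_of_eqOn_Ioo hmono hconc'
    (hμcont.continuousAt ((isOpen_stInt a b).mem_nhds hxh)) hw.le hwy hconst
  have hv : (w + y) / 2 ∈ Ioo w y := ⟨by linarith, by linarith⟩
  refine (hge _ hv).not_gt (one_div_sDen_mul_Mab_lt hx₀ hμcont hσcont hσpos hMfin hsa hμa
    (hsub hv) (fun t ht => hle t ⟨ht.1, ht.2.trans hv.2⟩) (lt_min hxh.1 (hw.trans hv.1))
    (Ioo_subset_Ioo_right (min_le_right _ _)) fun t ht => hlt t ⟨ht.1, ht.2.trans_le ?_⟩)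
  exact min_le_left _ _

end ScaleSpeed

theorem statement6_general    (a : ℝ) (b : EReal)
    (μ σ : ℝ → ℝ) (x₀ : ℝ) (hx₀ : x₀ ∈ stInt a b)
    (hμcont : ContinuousOn μ (stInt a b)) (hσcont : ContinuousOn σ (stInt a b))
    (hσpos : ∀ x ∈ stInt a b, 0 < (σ x) ^ 2)
    (hMfin : ∀ x ∈ stInt a b, IntegrableOn (mDen μ σ x₀) (Set.Ioo a x))
    (hsa : Tendsto (sDen μ σ x₀) (𝓝[>] a) atTop)
    (hsMb : Tendsto (fun x => sDen μ σ x₀ x * Mab μ σ x₀ a x) (atB b) atTop)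
    (μa : ℝ) (hμa : Tendsto μ (𝓝[>] a) (𝓝 μa))
    :
    (∀ w y : ℝ, a < w → w < y → (y : EReal) < b →
      (y - w) / (xiF μ σ x₀ a y - xiF μ σ x₀ a w) ≤
        sSup ((fun x => 1 / (sDen μ σ x₀ x * Mab μ σ x₀ a x)) '' stInt a b)) ∧
    ((∃ xh ∈ stInt a b, StrictMonoOn μ (Set.Ioo a xh) ∧
        ConcaveOn ℝ {x : ℝ | xh < x ∧ (x : EReal) < b} μ) →
      ∀ w y : ℝ, a < w → w < y → (y : EReal) < b →
        (y - w) / (xiF μ σ x₀ a y - xiF μ σ x₀ a w) <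
          sSup ((fun x => 1 / (sDen μ σ x₀ x * Mab μ σ x₀ a x)) '' stInt a b)) := by
  set z₀ := sSup ((fun x => 1 / (sDen μ σ x₀ x * Mab μ σ x₀ a x)) '' stInt a b)
  have hsM : ∀ t ∈ stInt a b, 0 < sDen μ σ x₀ t * Mab μ σ x₀ a t := fun t ht =>
    mul_pos sDen_pos (Mab_pos hσpos hMfin ht)
  have hz₀ : ∀ t ∈ stInt a b, 1 / (sDen μ σ x₀ t * Mab μ σ x₀ a t) ≤ z₀ := fun t ht =>
    le_csSup (bddAbove_one_div_sDen_mul_Mab hx₀ hμcont hσcont hσpos hMfin hsa hsMb hμa)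
      (mem_image_of_mem _ ht)
  have hz₀pos : 0 < z₀ := (one_div_pos.2 (hsM x₀ hx₀)).trans_le (hz₀ x₀ hx₀)
  have hinv : ∀ t ∈ stInt a b, z₀⁻¹ ≤ Mab μ σ x₀ a t * sDen μ σ x₀ t := fun t ht => by
    rw [mul_comm]
    exact inv_le_of_inv_le₀ (hsM t ht) (by simpa only [one_div] using hz₀ t ht)
  have hcont := continuousOn_Mab_mul_sDen hx₀ hμcont hσcont hσpos hMfin
  have hIcc : ∀ {w y : ℝ}, a < w → (y : EReal) < b → Icc w y ⊆ stInt a b := fun hw hyb t ht =>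
    ⟨hw.trans_le ht.1, (EReal.coe_le_coe_iff.2 ht.2).trans_lt hyb⟩
  have hξ : ∀ {w y : ℝ}, a < w → w < y → (y : EReal) < b →
      xiF μ σ x₀ a y - xiF μ σ x₀ a w = ∫ v in w..y, Mab μ σ x₀ a v * sDen μ σ x₀ v :=
    fun hw hwy hyb => xiF_sub_xiF hx₀ hμcont hσcont hσpos hMfin
      (hIcc hw hyb (left_mem_Icc.2 hwy.le)) (hIcc hw hyb (right_mem_Icc.2 hwy.le))
  refine ⟨fun w y hw hwy hyb => ?_, fun ⟨xh, hxh, hmono, hconc⟩ w y hw hwy hyb => ?_⟩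
  · rw [hξ hw hwy hyb]
    exact sub_div_intervalIntegral_le hwy hz₀pos
      ((hcont.mono (hIcc hw hyb)).intervalIntegrable_of_Icc hwy.le)
      fun t ht => hinv t (hIcc hw hyb ht)
  · obtain ⟨v, hv, hlt⟩ := exists_one_div_sDen_mul_Mab_lt hx₀ hμcont hσcont hσpos hMfin hsa hμa
      hxh hmono hconc hw hwy ⟨hw.trans hwy, hyb⟩ hz₀
    have hvI := hIcc hw hyb (Ioo_subset_Icc_self hv)
    rw [hξ hw hwy hyb]
    refine sub_div_intervalIntegral_lt hwy hz₀pos (hcont.mono (hIcc hw hyb))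
      (fun t ht => hinv t (hIcc hw hyb ht)) ⟨v, Ioo_subset_Icc_self hv, ?_⟩
    rw [mul_comm]
    exact inv_lt_of_inv_lt₀ (hsM v hvI) (by simpa only [one_div] using hlt)

theorem statement6    (a : ℝ) (b : EReal) (hab : (a : EReal) < b)
    (μ σ : ℝ → ℝ) (x₀ : ℝ) (hx₀ : x₀ ∈ stInt a b)
    (hμcont : ContinuousOn μ (stInt a b)) (hσcont : ContinuousOn σ (stInt a b))
    (hσpos : ∀ x ∈ stInt a b, 0 < (σ x) ^ 2)
    (hMfin : ∀ x ∈ stInt a b, IntegrableOn (mDen μ σ x₀) (Set.Ioo a x))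
    (hsa : Tendsto (sDen μ σ x₀) (𝓝[>] a) atTop)
    (hsMb : Tendsto (fun x => sDen μ σ x₀ x * Mab μ σ x₀ a x) (atB b) atTop)
    (μa : ℝ) (hμa : Tendsto μ (𝓝[>] a) (𝓝 μa))
    :
    (∀ w y : ℝ, a < w → w < y → (y : EReal) < b →
      (y - w) / (xiF μ σ x₀ a y - xiF μ σ x₀ a w) ≤
        sSup ((fun x => 1 / (sDen μ σ x₀ x * Mab μ σ x₀ a x)) '' stInt a b)) ∧
    ((∃ xh ∈ stInt a b, StrictMonoOn μ (Set.Ioo a xh) ∧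
        ConcaveOn ℝ {x : ℝ | xh < x ∧ (x : EReal) < b} μ) →
      ∀ w y : ℝ, a < w → w < y → (y : EReal) < b →
        (y - w) / (xiF μ σ x₀ a y - xiF μ σ x₀ a w) <
          sSup ((fun x => 1 / (sDen μ σ x₀ x * Mab μ σ x₀ a x)) '' stInt a b)) :=
  statement6_general a b μ σ x₀ hx₀ hμcont hσcont hσpos hMfin hsa hsMb μa hμa
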